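/- Identification of affine-support states: let V ≤ F_2^n have dimension r, let s_0 in F_2^n, and let p = 2^{-r} 1[· ∈ s_0 + V]. Suppose q is a probability distribution on F_2^n such that hat{q}(u) = hat{p}(u) for all u in a set Q containing a basis of V^⊥ and, if s_0 ∈ V, also one representative of every nonzero coset of F_2^n / V^⊥. Then q(0) = 2^{-r} if s_0 ∈ V and q(0) = 0 if s_0 ∉ V. -/

import Mathlib

/-- Mod-2 inner product on `F_2^n`. -/
def dot {n : ℕ} (u s : Fin n → ZMod 2) : ZMod 2 := ∑ j, u j * s j

/-- The sign `(-1)^{u·s}`. -/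
noncomputable def sgn {n : ℕ} (u s : Fin n → ZMod 2) : ℝ := (-1 : ℝ) ^ (dot u s).val

/-- Walsh transform of `p` at `u`. -/
noncomputable def walsh {n : ℕ} (p : (Fin n → ZMod 2) → ℝ) (u : Fin n → ZMod 2) : ℝ :=
  ∑ s : Fin n → ZMod 2, sgn u s * p s

/-- `p` is a probability distribution on `F_2^n`. -/
def IsProbDist {n : ℕ} (p : (Fin n → ZMod 2) → ℝ) : Prop :=
  (∀ s, 0 ≤ p s) ∧ ∑ s : Fin n → ZMod 2, p s = 1

/-!
The Walsh transform of the uniform distribution on `s₀ + V` equals `sgn u s₀` on `V^⊥` and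
vanishes off it. A probability vector `q` with `walsh q b = ±1` lives on one class of
`s ↦ b · s`, so agreement on a spanning set of `V^⊥` puts the support of `q` inside
`s₀ + (V^⊥)^⊥ = s₀ + V`; when `s₀ ∉ V` this excludes `0`. When `s₀ ∈ V`, both `q` and `p`
are supported on `V`, so their transforms are constant on the cosets of `V^⊥`; agreement on one
representative per coset gives `walsh q = walsh p`, and Walsh inversion at `0` gives
`q 0 = p 0`.
-/

variable {n : ℕ}

lemma dot_comm (u s : Fin n → ZMod 2) : dot u s = dot s u := dotProduct_comm u s

lemma dot_add_left (u u' s : Fin n → ZMod 2) : dot (u + u') s = dot u s + dot u' s :=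
  add_dotProduct u u' s

lemma dot_add_right (u s t : Fin n → ZMod 2) : dot u (s + t) = dot u s + dot u t :=
  dotProduct_add u s t

lemma sgn_eq_ite (u s : Fin n → ZMod 2) : sgn u s = if dot u s = 0 then 1 else -1 := by
  unfold sgn
  generalize dot u s = a
  obtain rfl | rfl : a = 0 ∨ a = 1 := by decide +revert
  · simp
  · simp [ZMod.val_one]

lemma sgn_eq_one_iff {u s : Fin n → ZMod 2} : sgn u s = 1 ↔ dot u s = 0 := by
  rw [sgn_eq_ite]; split_ifs <;> norm_num [*]

lemma sgn_le_one (u s : Fin n → ZMod 2) : sgn u s ≤ 1 := by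
  rw [sgn_eq_ite]; split_ifs <;> norm_num

lemma sgn_mul_self (u s : Fin n → ZMod 2) : sgn u s * sgn u s = 1 := by
  rw [sgn_eq_ite]; split_ifs <;> norm_num

lemma sgn_comm (u s : Fin n → ZMod 2) : sgn u s = sgn s u := by
  rw [sgn, sgn, dot_comm]

lemma sgn_zero_left (s : Fin n → ZMod 2) : sgn 0 s = 1 :=
  sgn_eq_one_iff.2 (zero_dotProduct s)

lemma sgn_add_right (u s t : Fin n → ZMod 2) : sgn u (s + t) = sgn u s * sgn u t := by
  rw [sgn, dot_add_right, ZMod.val_add, ← neg_one_pow_eq_pow_mod_two, pow_add, sgn, sgn]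

noncomputable def sgnChar (u : Fin n → ZMod 2) : AddChar (Fin n → ZMod 2) ℝ where
  toFun := sgn u
  map_zero_eq_one' := by rw [sgn_comm]; exact sgn_zero_left u
  map_add_eq_mul' := sgn_add_right u

@[simp]
lemma sgnChar_apply (u s : Fin n → ZMod 2) : sgnChar u s = sgn u s := rfl

lemma sgnChar_eq_zero_iff {u : Fin n → ZMod 2} : sgnChar u = 0 ↔ u = 0 := by
  simp only [AddChar.eq_zero_iff, sgnChar_apply, sgn_eq_one_iff]
  exact dotProduct_eq_zero_iff

abbrev dotForm (n : ℕ) : LinearMap.BilinForm (ZMod 2) (Fin n → ZMod 2) :=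
  dotProductBilin (ZMod 2) (ZMod 2)

def perp (V : Submodule (ZMod 2) (Fin n → ZMod 2)) : Submodule (ZMod 2) (Fin n → ZMod 2) :=
  (dotForm n).orthogonal V

lemma mem_perp {V : Submodule (ZMod 2) (Fin n → ZMod 2)} {u : Fin n → ZMod 2} :
    u ∈ perp V ↔ ∀ v ∈ V, dot u v = 0 := by
  simp only [perp, LinearMap.BilinForm.mem_orthogonal_iff, dotForm, dotProductBilin_apply_apply,
    dotProduct_comm _ u]
  rfl

lemma dotForm_isRefl : (dotForm n).IsRefl := fun u s h => by
  simpa [dotProduct_comm] using h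

lemma perp_perp (V : Submodule (ZMod 2) (Fin n → ZMod 2)) : perp (perp V) = V :=
  LinearMap.BilinForm.orthogonal_orthogonal
    (dotForm_isRefl.nondegenerate_iff_separatingLeft.2 fun u hu => dotProduct_eq_zero u hu)
    dotForm_isRefl V

open scoped Classical in
lemma sum_sgn_submodule (V : Submodule (ZMod 2) (Fin n → ZMod 2)) (u : Fin n → ZMod 2) :
    ∑ v : V, sgn u v = if u ∈ perp V then (Fintype.card V : ℝ) else 0 := by
  have h := ((sgnChar u).compAddMonoidHom V.subtype.toAddMonoidHom).sum_eq_ite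
  have hiff : (sgnChar u).compAddMonoidHom V.subtype.toAddMonoidHom = 0 ↔ u ∈ perp V := by
    simp [AddChar.eq_zero_iff, sgn_eq_one_iff, mem_perp]
  simpa [hiff] using h

lemma sum_sgn_left (s : Fin n → ZMod 2) :
    ∑ u, sgn u s = if s = 0 then (2 : ℝ) ^ n else 0 := by
  classical
  simp only [sgn_comm _ s]
  simpa [sgnChar_eq_zero_iff] using (sgnChar s).sum_eq_ite

lemma sum_walsh (f : (Fin n → ZMod 2) → ℝ) : ∑ u, walsh f u = 2 ^ n * f 0 := by
  simp only [walsh]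
  rw [Finset.sum_comm]
  simp [← Finset.sum_mul, sum_sgn_left]

lemma walsh_zero (f : (Fin n → ZMod 2) → ℝ) : walsh f 0 = ∑ s, f s := by
  simp [walsh, sgn_zero_left]

open scoped Classical in
lemma walsh_uniform_coset {r : ℕ} {V : Submodule (ZMod 2) (Fin n → ZMod 2)}
    (hr : Module.finrank (ZMod 2) V = r) {s0 : Fin n → ZMod 2} {p : (Fin n → ZMod 2) → ℝ}
    (hp : ∀ s, p s = if s + s0 ∈ V then ((2 : ℝ) ^ r)⁻¹ else 0) (u : Fin n → ZMod 2) :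
    walsh p u = if u ∈ perp V then sgn u s0 else 0 := by
  have hcard : (Fintype.card V : ℝ) = 2 ^ r := by
    rw [Module.card_eq_pow_finrank (K := ZMod 2), ZMod.card, hr]; push_cast; rfl
  calc walsh p u = ∑ s, if s + s0 ∈ V then ((2 : ℝ) ^ r)⁻¹ * sgn u s else 0 := by
        simp only [walsh, hp, mul_ite, mul_zero, mul_comm]
    _ = ∑ s, if s ∈ V then ((2 : ℝ) ^ r)⁻¹ * sgn u (s + s0) else 0 :=
        (Fintype.sum_equiv (Equiv.addRight s0) _ _ fun s => by
          simp [add_assoc, ZModModule.add_self]).symm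
    _ = ∑ v : V, ((2 : ℝ) ^ r)⁻¹ * sgn u (v + s0) := by
        rw [← Finset.sum_filter]
        exact Finset.sum_subtype _ (by simp) _
    _ = ((2 : ℝ) ^ r)⁻¹ * sgn u s0 * ∑ v : V, sgn u v := by
        rw [Finset.mul_sum]
        exact Finset.sum_congr rfl fun v _ => by rw [sgn_add_right]; ring
    _ = if u ∈ perp V then sgn u s0 else 0 := by
        rw [sum_sgn_submodule, hcard]
        split_ifs
        · field_simp
        · simp

lemma dot_add_eq_zero_of_walsh_eq_sgn {q : (Fin n → ZMod 2) → ℝ} (hq : IsProbDist q)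
    {u t : Fin n → ZMod 2} (h : walsh q u = sgn u t) {s : Fin n → ZMod 2} (hs : q s ≠ 0) :
    dot u (s + t) = 0 := by
  have hsum : ∑ x, (1 - sgn u (x + t)) * q x = 0 := by
    have hshift : ∑ x, sgn u (x + t) * q x = sgn u t * walsh q u := by
      rw [walsh, Finset.mul_sum]
      exact Finset.sum_congr rfl fun x _ => by rw [sgn_add_right]; ring
    simp only [sub_mul, one_mul, Finset.sum_sub_distrib, hq.2, hshift, h, sgn_mul_self, sub_self]
  have hterm := (Finset.sum_eq_zero_iff_of_nonneg fun x _ =>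
    mul_nonneg (sub_nonneg.2 (sgn_le_one u (x + t))) (hq.1 x)).1 hsum s (Finset.mem_univ s)
  rw [← sgn_eq_one_iff]
  linarith [(mul_eq_zero.1 hterm).resolve_right hs]

lemma add_mem_of_walsh_eq_sgn {V : Submodule (ZMod 2) (Fin n → ZMod 2)}
    {q : (Fin n → ZMod 2) → ℝ} (hq : IsProbDist q) {B : Set (Fin n → ZMod 2)}
    (hB : perp V ≤ Submodule.span (ZMod 2) B) {t : Fin n → ZMod 2}
    (h : ∀ b ∈ B, walsh q b = sgn b t) {s : Fin n → ZMod 2} (hs : q s ≠ 0) : s + t ∈ V := by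
  have hspan : Submodule.span (ZMod 2) B ≤ LinearMap.ker ((dotForm n).flip (s + t)) :=
    Submodule.span_le.2 fun b hb => dot_add_eq_zero_of_walsh_eq_sgn hq (h b hb) hs
  rw [← perp_perp V, mem_perp]
  intro u hu
  rw [dot_comm]
  exact hspan (hB hu)

lemma walsh_eq_of_add_mem_perp {V : Submodule (ZMod 2) (Fin n → ZMod 2)}
    {f : (Fin n → ZMod 2) → ℝ} (hf : ∀ s, f s ≠ 0 → s ∈ V) {u u' : Fin n → ZMod 2}
    (h : u + u' ∈ perp V) : walsh f u = walsh f u' := by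
  refine Finset.sum_congr rfl fun s _ => ?_
  by_cases hs : f s = 0
  · simp [hs]
  · have hdot : dot u s - dot u' s = 0 := by
      rw [ZModModule.sub_eq_add, ← dot_add_left]
      exact mem_perp.1 h s (hf s hs)
    rw [sgn, sgn, sub_eq_zero.1 hdot]

lemma walsh_eq_sum_of_mem_perp {V : Submodule (ZMod 2) (Fin n → ZMod 2)}
    {f : (Fin n → ZMod 2) → ℝ} (hf : ∀ s, f s ≠ 0 → s ∈ V) {u : Fin n → ZMod 2}
    (hu : u ∈ perp V) : walsh f u = ∑ s, f s := by
  rw [walsh_eq_of_add_mem_perp hf (u' := 0) (by simpa), walsh_zero]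

lemma apply_zero_eq_of_walsh_eq {f g : (Fin n → ZMod 2) → ℝ} (h : ∀ u, walsh f u = walsh g u) :
    f 0 = g 0 := by
  have h0 : (2 : ℝ) ^ n * f 0 = 2 ^ n * g 0 := by
    rw [← sum_walsh, ← sum_walsh, Finset.sum_congr rfl fun u _ => h u]
  exact mul_left_cancel₀ (by positivity) h0

open scoped Classical in
/-- Identification of affine-support syndrome states from annihilator and coset data. -/
theorem stmt18 {n r : ℕ} (V : Submodule (ZMod 2) (Fin n → ZMod 2))
    (hr : Module.finrank (ZMod 2) V = r) (s0 : Fin n → ZMod 2)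
    (p : (Fin n → ZMod 2) → ℝ)
    (hp : ∀ s, p s = if s + s0 ∈ V then ((2 : ℝ) ^ r)⁻¹ else 0)
    (q : (Fin n → ZMod 2) → ℝ) (hq : IsProbDist q)
    (Q : Set (Fin n → ZMod 2))
    (hagree : ∀ u ∈ Q, walsh q u = walsh p u)
    (hbasis : ∃ B : Finset (Fin n → ZMod 2), ↑B ⊆ Q ∧
      (∀ b ∈ B, ∀ v ∈ V, dot b v = 0) ∧
      LinearIndependent (ZMod 2) (Subtype.val : {x // x ∈ B} → (Fin n → ZMod 2)) ∧
      (∀ u : Fin n → ZMod 2, (∀ v ∈ V, dot u v = 0) →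
        u ∈ Submodule.span (ZMod 2) (B : Set (Fin n → ZMod 2))))
    (hcoset : s0 ∈ V → ∀ w : Fin n → ZMod 2, ¬ (∀ v ∈ V, dot w v = 0) →
      ∃ u ∈ Q, ∀ v ∈ V, dot u v = dot w v) :
    q 0 = if s0 ∈ V then ((2 : ℝ) ^ r)⁻¹ else 0 := by
  obtain ⟨B, hBQ, hBperp, -, hBspan⟩ := hbasis
  have hwalsh_p := walsh_uniform_coset hr hp
  have hq_supp : ∀ s, q s ≠ 0 → s + s0 ∈ V := fun s =>
    add_mem_of_walsh_eq_sgn hq (fun u hu => hBspan u (mem_perp.1 hu)) fun b hb => by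
      rw [hagree b (hBQ hb), hwalsh_p, if_pos (mem_perp.2 (hBperp b hb))]
  by_cases hs0 : s0 ∈ V
  · have hqV : ∀ s, q s ≠ 0 → s ∈ V := fun s hs => (V.add_mem_iff_left hs0).1 (hq_supp s hs)
    have hpV : ∀ s, p s ≠ 0 → s ∈ V := fun s hs =>
      (V.add_mem_iff_left hs0).1 (by by_contra h; simp [hp, h] at hs)
    have hwalsh : ∀ u, walsh q u = walsh p u := by
      intro u
      by_cases hu : u ∈ perp V
      · rw [walsh_eq_sum_of_mem_perp hqV hu, hq.2, hwalsh_p, if_pos hu,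
          sgn_eq_one_iff.2 (mem_perp.1 hu s0 hs0)]
      · obtain ⟨u', hu'Q, hu'⟩ := hcoset hs0 u (mt mem_perp.2 hu)
        have huu' : u + u' ∈ perp V := mem_perp.2 fun v hv => by
          rw [dot_add_left, hu' v hv, ZModModule.add_self]
        rw [walsh_eq_of_add_mem_perp hqV huu', hagree u' hu'Q, walsh_eq_of_add_mem_perp hpV huu']
    rw [if_pos hs0, apply_zero_eq_of_walsh_eq hwalsh, hp, zero_add, if_pos hs0]
  · rw [if_neg hs0]
    by_contra h
    exact hs0 (by simpa using hq_supp 0 h)
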